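/- Let H be an (r,t)-Ruzsa–Szemerédi graph on vertex set V₁ of N vertices with induced matchings M₁,...,M_t each of size r, and fix j* ∈ [t]. Let G be formed from k disjoint copies H₁,...,H_k of H by identifying, for each i, all vertices of V(H_i) except the 2r vertices matched by the j*-th matching of H_i, with the corresponding vertices of a common shared set (each copy's j*-th matching vertices remain private to that copy). If in every copy the matching M_{j*} is removed, then the maximum matching size of G is at most N; if in every copy the matching M_{j*} is retained, then the maximum matching size of G is at least k·r. -/

import Mathlib

open Finset
open scoped Classical

/-- `M` is a matching in the graph `G`: a set of edges of `G` that are pairwise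
vertex-disjoint. -/
def IsMatchingIn {V : Type*} (G : SimpleGraph V) (M : Finset (Sym2 V)) : Prop :=
  (∀ e ∈ M, e ∈ G.edgeSet) ∧
  ∀ e ∈ M, ∀ f ∈ M, e ≠ f → ∀ v : V, v ∈ e → v ∉ f

/-- The maximum matching size of a graph on a finite vertex set. -/
noncomputable def matchNum {V : Type*} [Fintype V] (G : SimpleGraph V) : ℕ :=
  sSup {k | ∃ M : Finset (Sym2 V), IsMatchingIn G M ∧ M.card = k}

/-! The private vertices of a copy are exactly the vertices of its `j*`-th matching, so the
`k` copies of `M_{j*}` are pairwise vertex-disjoint and together form a matching of size `k·r`.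
Once `M_{j*}` is removed, an edge of a copy cannot have both endpoints private: its endpoints
would then both be covered by `M_{j*}`, and since `M_{j*}` is induced the edge would belong
to it. So every edge of a matching contains a shared vertex, of which there are only `N`. -/

namespace IsMatchingIn

variable {V : Type*} {G : SimpleGraph V} {M : Finset (Sym2 V)}

theorem card_le_of_forall_exists_mem {α : Type*} [Fintype α] {g : α → V}
    (hM : IsMatchingIn G M) (h : ∀ e ∈ M, ∃ a, g a ∈ e) : M.card ≤ Fintype.card α := by
  choose a ha using h
  have hinj : ∀ e (he : e ∈ M) f (hf : f ∈ M), a e he = a f hf → e = f := by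
    intro e he f hf hef
    by_contra hne
    exact hM.2 e he f hf hne _ (ha e he) (hef ▸ ha f hf)
  calc M.card = Fintype.card M := (Fintype.card_coe M).symm
    _ ≤ Fintype.card α := Fintype.card_le_of_injective (fun e => a e.1 e.2)
      fun e f hef => Subtype.ext (hinj _ _ _ _ hef)

theorem image {W : Type*} [DecidableEq W] {G' : SimpleGraph W} {f : V → W}
    (hf : Function.Injective f)
    (hG : Set.MapsTo (Sym2.map f) G.edgeSet G'.edgeSet) (hM : IsMatchingIn G M) :
    IsMatchingIn G' (M.image (Sym2.map f)) := by
  refine ⟨?_, ?_⟩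
  · simp only [mem_image, forall_exists_index, and_imp, forall_apply_eq_imp_iff₂]
    exact fun e he => hG (hM.1 e he)
  · simp only [mem_image, forall_exists_index, and_imp, forall_apply_eq_imp_iff₂]
    intro e he e' he' hne w hw hw'
    obtain ⟨v, hv, rfl⟩ := Sym2.mem_map.mp hw
    obtain ⟨v', hv', hvv'⟩ := Sym2.mem_map.mp hw'
    exact hM.2 e he e' he' (fun h => hne (h ▸ rfl)) v hv (hf hvv' ▸ hv')

variable [DecidableEq V] {ι : Type*} {s : Finset ι} {A : ι → Finset (Sym2 V)}

theorem biUnion (hA : ∀ i ∈ s, IsMatchingIn G (A i))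
    (hdisj : ∀ i ∈ s, ∀ j ∈ s, i ≠ j → ∀ e ∈ A i, ∀ f ∈ A j, ∀ v ∈ e, v ∉ f) :
    IsMatchingIn G (s.biUnion A) := by
  refine ⟨?_, ?_⟩
  · simp only [mem_biUnion, forall_exists_index, and_imp]
    exact fun e i hi he => (hA i hi).1 e he
  · simp only [mem_biUnion, forall_exists_index, and_imp]
    intro e i hi he f j hj hf hne
    rcases eq_or_ne i j with rfl | hij
    · exact (hA i hi).2 e he f hf hne
    · exact hdisj i hi j hj hij e he f hf

end IsMatchingIn

theorem card_biUnion_of_vertexDisjoint {V ι : Type*} [DecidableEq V] {s : Finset ι}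
    {A : ι → Finset (Sym2 V)}
    (hdisj : ∀ i ∈ s, ∀ j ∈ s, i ≠ j → ∀ e ∈ A i, ∀ f ∈ A j, ∀ v ∈ e, v ∉ f) :
    (s.biUnion A).card = ∑ i ∈ s, (A i).card :=
  card_biUnion fun i hi j hj hij => disjoint_left.mpr fun e hei hej =>
    hdisj i hi j hj hij e hei e hej _ (Sym2.out_fst_mem e) (Sym2.out_fst_mem e)

section matchNum

variable {V : Type*} [Fintype V] {G : SimpleGraph V}

theorem matchNum_le {n : ℕ} (h : ∀ M, IsMatchingIn G M → M.card ≤ n) : matchNum G ≤ n :=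
  csSup_le ⟨0, ∅, ⟨by simp, by simp⟩, rfl⟩ fun _ ⟨M, hM, hcard⟩ => hcard ▸ h M hM

theorem IsMatchingIn.card_le_matchNum {M : Finset (Sym2 V)} (hM : IsMatchingIn G M) :
    M.card ≤ matchNum G :=
  le_csSup ⟨Fintype.card (Sym2 V), fun _ ⟨M', _, hcard⟩ => hcard ▸ card_le_univ M'⟩ ⟨M, hM, rfl⟩

end matchNum

section privatize

variable {α ι : Type*} (p : α → Prop) [DecidablePred p]

def privatize (i : ι) (v : α) : α ⊕ ι × α :=
  if p v then .inr (i, v) else .inl v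

variable {p}

theorem privatize_injective (i : ι) : Function.Injective (privatize p i) := by
  intro v w h
  unfold privatize at h
  split_ifs at h <;> simp_all

theorem exists_inl_mem_map_privatize {i : ι} {e : Sym2 α} (he : ¬ ∀ v ∈ e, p v) :
    ∃ v, Sum.inl v ∈ Sym2.map (privatize p i) e := by
  obtain ⟨v, hv, hpv⟩ := not_forall₂.mp he
  exact ⟨v, Sym2.mem_map.mpr ⟨v, hv, if_neg hpv⟩⟩

theorem notMem_map_privatize_of_ne {i i' : ι} (hii' : i ≠ i') {e e' : Sym2 α}
    (he : ∀ v ∈ e, p v) (he' : ∀ v ∈ e', p v) {x : α ⊕ ι × α}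
    (hx : x ∈ Sym2.map (privatize p i) e) : x ∉ Sym2.map (privatize p i') e' := by
  intro hx'
  obtain ⟨v, hv, rfl⟩ := Sym2.mem_map.mp hx
  obtain ⟨v', hv', hvv'⟩ := Sym2.mem_map.mp hx'
  rw [privatize, privatize, if_pos (he v hv), if_pos (he' v' hv')] at hvv'
  exact hii' (Prod.ext_iff.mp (Sum.inr_injective hvv')).1.symm

variable [DecidableEq α] [DecidableEq ι] [Fintype ι] {M : Finset (Sym2 α)}

theorem card_biUnion_image_privatize (hp : ∀ e ∈ M, ∀ v ∈ e, p v) :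
    ((univ : Finset ι).biUnion fun i => M.image (Sym2.map (privatize p i))).card =
      Fintype.card ι * M.card := by
  rw [card_biUnion_of_vertexDisjoint, sum_const_nat fun i _ =>
    card_image_of_injective M (Sym2.map.injective (privatize_injective i)), card_univ]
  simp only [mem_image]
  rintro i - i' - hii' - ⟨e, he, rfl⟩ - ⟨e', he', rfl⟩ x hx
  exact notMem_map_privatize_of_ne hii' (hp e he) (hp e' he') hx

theorem IsMatchingIn.biUnion_image_privatize {G : SimpleGraph α} {G' : SimpleGraph (α ⊕ ι × α)}
    (hM : IsMatchingIn G M) (hp : ∀ e ∈ M, ∀ v ∈ e, p v)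
    (hG : ∀ i, Set.MapsTo (Sym2.map (privatize p i)) G.edgeSet G'.edgeSet) :
    IsMatchingIn G' (univ.biUnion fun i => M.image (Sym2.map (privatize p i))) := by
  refine IsMatchingIn.biUnion (fun i _ => hM.image (privatize_injective i) (hG i)) ?_
  simp only [mem_image]
  rintro i - i' - hii' - ⟨e, he, rfl⟩ - ⟨e', he', rfl⟩ x hx
  exact notMem_map_privatize_of_ne hii' (hp e he) (hp e' he') hx

end privatize

theorem stmt9_general (N r t k : ℕ) (jstar : Fin t)
    (H : SimpleGraph (Fin N))
    (M : Fin t → Finset (Sym2 (Fin N)))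
    (hedges : H.edgeSet = ↑(Finset.univ.biUnion M))
    (hcard : ∀ j, (M j).card = r)
    (hmatch : ∀ j, ∀ e ∈ M j, ∀ f ∈ M j, e ≠ f → ∀ v : Fin N, v ∈ e → v ∉ f)
    (hinduced : ∀ j, ∀ e ∈ H.edgeSet,
      (∀ v : Fin N, v ∈ e → ∃ f ∈ M j, v ∈ f) → e ∈ M j)
    (φ : Fin k → Fin N → (Fin N ⊕ Fin k × Fin N))
    (hφ : ∀ i v, φ i v =
      if ∃ f ∈ M jstar, v ∈ f then Sum.inr (i, v) else Sum.inl v)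
    (Grem Gkeep : SimpleGraph (Fin N ⊕ Fin k × Fin N))
    (hGrem : Grem.edgeSet = ⋃ i : Fin k, (Sym2.map (φ i)) '' (H.edgeSet \ ↑(M jstar)))
    (hGkeep : Gkeep.edgeSet = ⋃ i : Fin k, (Sym2.map (φ i)) '' H.edgeSet) :
    matchNum Grem ≤ N ∧ k * r ≤ matchNum Gkeep := by
  obtain rfl : φ = privatize (fun v => ∃ f ∈ M jstar, v ∈ f) := funext₂ hφ
  constructor
  · refine matchNum_le fun A hA => (hA.card_le_of_forall_exists_mem (g := Sum.inl)
      fun x hx => ?_).trans_eq (Fintype.card_fin N)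
    obtain ⟨i, e, ⟨heH, heM⟩, rfl⟩ := by simpa [hGrem] using hA.1 x hx
    exact exists_inl_mem_map_privatize fun h => heM (hinduced jstar e heH h)
  · have hMj : IsMatchingIn H (M jstar) :=
      ⟨fun e he => by simpa [hedges] using ⟨jstar, he⟩, hmatch jstar⟩
    have hcovered : ∀ e ∈ M jstar, ∀ v ∈ e, ∃ f ∈ M jstar, v ∈ f := fun e he _ hv => ⟨e, he, hv⟩
    have hcopies : ∀ i, Set.MapsTo (Sym2.map (privatize _ i)) H.edgeSet Gkeep.edgeSet :=
      fun i e he => by rw [hGkeep]; exact Set.mem_iUnion.mpr ⟨i, e, he, rfl⟩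
    calc k * r = _ := by rw [card_biUnion_image_privatize hcovered, Fintype.card_fin, hcard]
      _ ≤ matchNum Gkeep := (hMj.biUnion_image_privatize hcovered hcopies).card_le_matchNum

/-- Claim 6.2: let `H` be an `(r,t)`-Ruzsa–Szemerédi graph on `N` vertices whose edge
set is the disjoint union of `t` induced matchings `M₁,...,M_t` of size `r` each, and
fix `j*`. Form a graph `G` from `k` copies of `H`, where the map `φ i` sends the
vertices matched by `M_{j*}` to private copies `(i, v)` and identifies all other
vertices across the copies. If the `j*`-th matching is removed from every copy
(`Grem`), then `matchNum Grem ≤ N`; if it is retained in every copy (`Gkeep`), then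
`matchNum Gkeep ≥ k·r`. -/
theorem stmt9 (N r t k : ℕ) (jstar : Fin t)
    (H : SimpleGraph (Fin N))
    (M : Fin t → Finset (Sym2 (Fin N)))
    (hedges : H.edgeSet = ↑(Finset.univ.biUnion M))
    (hdisj : ∀ j j', j ≠ j' → Disjoint (M j) (M j'))
    (hcard : ∀ j, (M j).card = r)
    (hmatch : ∀ j, ∀ e ∈ M j, ∀ f ∈ M j, e ≠ f → ∀ v : Fin N, v ∈ e → v ∉ f)
    (hinduced : ∀ j, ∀ e ∈ H.edgeSet,
      (∀ v : Fin N, v ∈ e → ∃ f ∈ M j, v ∈ f) → e ∈ M j)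
    (φ : Fin k → Fin N → (Fin N ⊕ Fin k × Fin N))
    (hφ : ∀ i v, φ i v =
      if ∃ f ∈ M jstar, v ∈ f then Sum.inr (i, v) else Sum.inl v)
    (Grem Gkeep : SimpleGraph (Fin N ⊕ Fin k × Fin N))
    (hGrem : Grem.edgeSet = ⋃ i : Fin k, (Sym2.map (φ i)) '' (H.edgeSet \ ↑(M jstar)))
    (hGkeep : Gkeep.edgeSet = ⋃ i : Fin k, (Sym2.map (φ i)) '' H.edgeSet) :
    matchNum Grem ≤ N ∧ k * r ≤ matchNum Gkeep :=
  stmt9_general N r t k jstar H M hedges hcard hmatch hinduced φ hφ Grem Gkeep hGrem hGkeep
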